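/- Consider two adjacent bilinearly parametrised quadrilateral elements with vertices λ̃, λ̃', γ̃, γ̃', ρ̃, ρ̃' ∈ ℝ², where both the left quadrilateral (λ̃, γ̃, γ̃', λ̃') and the right quadrilateral (γ̃, ρ̃, ρ̃', γ̃') are strictly convex in counterclockwise order. Let n ≥ 4, let l₀, l₁, r₀, r₁, c₀, c₁, c₂ be the conventional weight coefficients of the common edge, and suppose real values ΔC₀,…,ΔC_{n−1} and ΔL_t, ΔR_t for t ∈ {0, 1, n−1, n} are given which satisfy the four indexed equations Eq(0), Eq(1), Eq(n) and Eq(n+1). Then there exist real values ΔL_t, ΔR_t for t = 2,…,n−2 such that Eq(s) holds for every s = 2,…,n−1; that is, the "Middle" system of G¹-continuity equations is always consistent in terms of the side middle control points. -/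

import Mathlib

/-- z-component of the cross product of two planar vectors. -/
def cross2 (a b : ℝ × ℝ) : ℝ := a.1 * b.2 - a.2 * b.1

/-- the indexed G¹-continuity equation "Eq(s)" for an inner edge in the case of the
global bilinear in-plane parametrisation (out-of-range terms carry zero coefficients). -/
def EqS (n : ℕ) (l0 l1 r0 r1 c0 c1 c2 : ℝ) (dL dR dC : ℕ → ℝ) (s : ℕ) : Prop :=
  ((n : ℝ) + 1 - (s : ℝ)) * (l0 * dL s + r0 * dR s)
    + (s : ℝ) * (l1 * dL (s - 1) + r1 * dR (s - 1))
    + (((n : ℝ) - (s : ℝ)) * ((n : ℝ) + 1 - (s : ℝ)) / (n : ℝ)) * c0 * dC s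
    + (2 * (s : ℝ) * ((n : ℝ) + 1 - (s : ℝ)) / (n : ℝ)) * c1 * dC (s - 1)
    + ((s : ℝ) * ((s : ℝ) - 1) / (n : ℝ)) * c2 * dC (s - 2) = 0

/-!
Eq(s) sees `ΔL_t, ΔR_t` only through `x_t = l₀ΔL_t + r₀ΔR_t` and `y_t = l₁ΔL_t + r₁ΔR_t`, and
for `2 ≤ s ≤ n - 1` only through `x_2, …, x_{n-1}` and `y_1, …, y_{n-2}`, where `x_{n-1}` and
`y_1` are given. If `l₀r₁ - l₁r₀ ≠ 0` every pair `(x_t, y_t)` is attainable, and the equations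
are solved one at a time: Eq(s) fixes `x_s` for `s ≤ n - 2`, and Eq(n-1) fixes `y_{n-2}`
(this needs `n ≥ 4`, so that `y_1` and `y_{n-2}` are different unknowns).

If `l₀r₁ - l₁r₀ = 0`, then `(x_t, y_t) = (l₀z_t, l₁z_t)`. Since
`l₁²c₀ - 2l₀l₁c₁ + l₀²c₂ = -⟨ρ̃-γ̃, ρ̃'-γ̃'⟩ (l₀r₁ - l₁r₀)` vanishes, the explicit sequence
`ẑ = degenerateMiddle` solves every Eq(s). The difference `z - ẑ` obeys the two-term recurrence
`(n+1-s) l₀ w_s + s l₁ w_{s-1} = 0` at `s = 0, 1, n, n+1`, which forces `w_1 = w_{n-1} = 0`; so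
`ẑ` matches the given boundary data and can be used in the middle.
-/

lemma exists_mul_add_eq_of_det_ne_zero {a b c d : ℝ} (h : a * d - c * b ≠ 0) (x y : ℝ) :
    ∃ p q, a * p + b * q = x ∧ c * p + d * q = y :=
  ⟨(d * x - b * y) / (a * d - c * b), (a * y - c * x) / (a * d - c * b),
    by rw [mul_div_assoc', mul_div_assoc', ← add_div, div_eq_iff h]; ring,
    by rw [mul_div_assoc', mul_div_assoc', ← add_div, div_eq_iff h]; ring⟩

section MiddleSystem

variable {n : ℕ} {l0 l1 r0 r1 c0 c1 c2 : ℝ} {dL dR dC : ℕ → ℝ}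

variable (n c0 c1 c2 dC) in
noncomputable def commonEdgeTerm (s : ℕ) : ℝ :=
  (((n : ℝ) - s) * ((n : ℝ) + 1 - s) / n) * c0 * dC s
    + (2 * (s : ℝ) * ((n : ℝ) + 1 - s) / n) * c1 * dC (s - 1)
    + ((s : ℝ) * ((s : ℝ) - 1) / n) * c2 * dC (s - 2)

lemma eqS_iff {s : ℕ} : EqS n l0 l1 r0 r1 c0 c1 c2 dL dR dC s ↔
    ((n : ℝ) + 1 - s) * (l0 * dL s + r0 * dR s) + s * (l1 * dL (s - 1) + r1 * dR (s - 1))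
      + commonEdgeTerm n c0 c1 c2 dC s = 0 := by
  simp only [EqS, commonEdgeTerm, add_assoc]

variable (n l0 l1 r0 r1 c0 c1 c2 dL dR dC) in
def MiddleConsistent : Prop :=
  ∃ dL' dR' : ℕ → ℝ,
    dL' 0 = dL 0 ∧ dL' 1 = dL 1 ∧ dL' (n - 1) = dL (n - 1) ∧ dL' n = dL n ∧
    dR' 0 = dR 0 ∧ dR' 1 = dR 1 ∧ dR' (n - 1) = dR (n - 1) ∧ dR' n = dR n ∧
    ∀ s, 2 ≤ s → s ≤ n - 1 → EqS n l0 l1 r0 r1 c0 c1 c2 dL' dR' dC s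

lemma middleConsistent_of_reachable (x y : ℕ → ℝ)
    (hreach : ∀ t, ∃ a b, l0 * a + r0 * b = x t ∧ l1 * a + r1 * b = y t)
    (hx : l0 * dL (n - 1) + r0 * dR (n - 1) = x (n - 1))
    (hy : l1 * dL 1 + r1 * dR 1 = y 1)
    (heq : ∀ s, 2 ≤ s → s ≤ n - 1 →
      ((n : ℝ) + 1 - s) * x s + s * y (s - 1) + commonEdgeTerm n c0 c1 c2 dC s = 0) :
    MiddleConsistent n l0 l1 r0 r1 c0 c1 c2 dL dR dC := by
  choose a b hab using hreach
  let dL' t := if 2 ≤ t ∧ t ≤ n - 2 then a t else dL t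
  let dR' t := if 2 ≤ t ∧ t ≤ n - 2 then b t else dR t
  have hX : ∀ s, 2 ≤ s → s ≤ n - 1 → l0 * dL' s + r0 * dR' s = x s := by
    intro s hs2 hs
    by_cases hmid : 2 ≤ s ∧ s ≤ n - 2
    · simp only [dL', dR', if_pos hmid, (hab s).1]
    · obtain rfl : s = n - 1 := by omega
      simp only [dL', dR', if_neg hmid, hx]
  have hY : ∀ t, 1 ≤ t → t ≤ n - 2 → l1 * dL' t + r1 * dR' t = y t := by
    intro t ht1 ht
    by_cases hmid : 2 ≤ t ∧ t ≤ n - 2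
    · simp only [dL', dR', if_pos hmid, (hab t).2]
    · obtain rfl : t = 1 := by omega
      simp only [dL', dR', if_neg hmid, hy]
  refine ⟨dL', dR', if_neg (by omega), if_neg (by omega), if_neg (by omega), if_neg (by omega),
    if_neg (by omega), if_neg (by omega), if_neg (by omega), if_neg (by omega), ?_⟩
  intro s hs2 hs
  rw [eqS_iff, hX s hs2 hs, hY (s - 1) (by omega) (by omega)]
  exact heq s hs2 hs

lemma middleConsistent_of_det_ne_zero (hn : 4 ≤ n) (hdet : l0 * r1 - l1 * r0 ≠ 0) :
    MiddleConsistent n l0 l1 r0 r1 c0 c1 c2 dL dR dC := by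
  set X := l0 * dL (n - 1) + r0 * dR (n - 1)
  set Y := l1 * dL 1 + r1 * dR 1
  set e := commonEdgeTerm n c0 c1 c2 dC
  let y t := if t = n - 2 then -(2 * X + e (n - 1)) / ((n : ℝ) - 1) else if t = 1 then Y else 0
  let x s := if s = n - 1 then X else -(s * y (s - 1) + e s) / ((n : ℝ) + 1 - s)
  refine middleConsistent_of_reachable x y
    (fun t => exists_mul_add_eq_of_det_ne_zero hdet _ _) (by simp [x, X])
    (by simp [y, Y, show 1 ≠ n - 2 by omega]) ?_
  intro s hs2 hs
  have hn1 : ((n - 1 : ℕ) : ℝ) = n - 1 := by rw [Nat.cast_sub (by omega)]; simp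
  rcases eq_or_ne s (n - 1) with rfl | hs'
  · have : (n : ℝ) - 1 ≠ 0 := by rw [← hn1]; norm_cast; omega
    simp only [x, y, if_true, show n - 1 - 1 = n - 2 by omega, hn1]
    field_simp
    ring
  · have : (n : ℝ) + 1 - s ≠ 0 := by
      have : (s : ℝ) ≤ n := by exact_mod_cast (by omega : s ≤ n)
      linarith
    simp only [x, if_neg hs']
    field_simp
    ring

variable (n l0 l1 c0 c2 dC) in
noncomputable def degenerateMiddle (s : ℕ) : ℝ :=
  -(((n : ℝ) - s) * c0 * dC s / l0 + s * c2 * dC (s - 1) / l1) / n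

lemma degenerateMiddle_solves (hn : n ≠ 0) (hl0 : l0 ≠ 0) (hl1 : l1 ≠ 0)
    (hkey : l1 ^ 2 * c0 - 2 * l0 * l1 * c1 + l0 ^ 2 * c2 = 0) (s : ℕ) :
    ((n : ℝ) + 1 - s) * (l0 * degenerateMiddle n l0 l1 c0 c2 dC s)
      + s * (l1 * degenerateMiddle n l0 l1 c0 c2 dC (s - 1))
      + commonEdgeTerm n c0 c1 c2 dC s = 0 := by
  have hn' : (n : ℝ) ≠ 0 := by exact_mod_cast hn
  cases s with
  | zero =>
    simp only [degenerateMiddle, commonEdgeTerm]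
    field_simp
    ring
  | succ s =>
    simp only [degenerateMiddle, commonEdgeTerm, Nat.add_sub_cancel, show s + 1 - 2 = s - 1 by omega]
    push_cast
    field_simp
    linear_combination (-(s + 1) * ((n : ℝ) - s) * dC s) * hkey

lemma eq_zero_of_recurrence_at_ends (hn : n ≠ 0) {a b : ℝ} (ha : a ≠ 0) (hb : b ≠ 0) {w : ℕ → ℝ}
    (hrec : ∀ s ∈ ({0, 1, n, n + 1} : Finset ℕ),
      ((n : ℝ) + 1 - s) * (a * w s) + s * (b * w (s - 1)) = 0) :
    w 1 = 0 ∧ w (n - 1) = 0 := by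
  have hn' : (n : ℝ) ≠ 0 := by exact_mod_cast hn
  have h0 := hrec 0 (by simp)
  have h1 := hrec 1 (by simp)
  have hN := hrec n (by simp)
  have hN1 := hrec (n + 1) (by simp)
  simp only [Nat.sub_self, Nat.add_sub_cancel] at h1 hN1
  push_cast at h0 h1 hN hN1
  have hw0 : w 0 = 0 := eq_zero_of_ne_zero_of_mul_left_eq_zero
    (mul_ne_zero (by positivity) ha) (by linear_combination h0 : ((n : ℝ) + 1) * a * w 0 = 0)
  have hwN : w n = 0 := eq_zero_of_ne_zero_of_mul_left_eq_zero
    (mul_ne_zero (by positivity) hb) (by linear_combination hN1 : ((n : ℝ) + 1) * b * w n = 0)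
  exact ⟨eq_zero_of_ne_zero_of_mul_left_eq_zero (mul_ne_zero hn' ha)
      (by linear_combination h1 - b * hw0 : (n : ℝ) * a * w 1 = 0),
    eq_zero_of_ne_zero_of_mul_left_eq_zero (mul_ne_zero hn' hb)
      (by linear_combination hN - a * hwN : (n : ℝ) * b * w (n - 1) = 0)⟩

lemma middleConsistent_of_det_eq_zero (hn : n ≠ 0) (hl0 : l0 ≠ 0) (hl1 : l1 ≠ 0)
    (hdet : l0 * r1 - l1 * r0 = 0) (hkey : l1 ^ 2 * c0 - 2 * l0 * l1 * c1 + l0 ^ 2 * c2 = 0)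
    (h0 : EqS n l0 l1 r0 r1 c0 c1 c2 dL dR dC 0) (h1 : EqS n l0 l1 r0 r1 c0 c1 c2 dL dR dC 1)
    (hN : EqS n l0 l1 r0 r1 c0 c1 c2 dL dR dC n)
    (hN1 : EqS n l0 l1 r0 r1 c0 c1 c2 dL dR dC (n + 1)) :
    MiddleConsistent n l0 l1 r0 r1 c0 c1 c2 dL dR dC := by
  set z := degenerateMiddle n l0 l1 c0 c2 dC
  have hz := degenerateMiddle_solves (c1 := c1) (dC := dC) hn hl0 hl1 hkey
  let u t := (l0 * dL t + r0 * dR t) / l0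
  have hu : ∀ t, l0 * dL t + r0 * dR t = l0 * u t := fun t => by simp only [u]; field_simp
  have hv : ∀ t, l1 * dL t + r1 * dR t = l1 * u t := fun t => by
    simp only [u]
    field_simp
    linear_combination dR t * hdet
  have hw := eq_zero_of_recurrence_at_ends (w := fun t => u t - z t) hn hl0 hl1 (by
    intro s hs
    have h : EqS n l0 l1 r0 r1 c0 c1 c2 dL dR dC s := by
      simp only [Finset.mem_insert, Finset.mem_singleton] at hs
      rcases hs with rfl | rfl | rfl | rfl <;> assumption
    rw [eqS_iff, hu s, hv (s - 1)] at h
    linear_combination h - hz s)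
  refine middleConsistent_of_reachable (fun t => l0 * z t) (fun t => l1 * z t)
    (fun t => ⟨z t, 0, by ring, by ring⟩) ?_ ?_ (fun s _ _ => hz s)
  · rw [hu, sub_eq_zero.mp hw.2]
  · rw [hv, sub_eq_zero.mp hw.1]

end MiddleSystem

lemma cross2_sub_sub (a b c : ℝ × ℝ) : cross2 (a - b) (c - b) = cross2 (b - c) (a - b) := by
  simp only [cross2, Prod.fst_sub, Prod.snd_sub]
  ring

lemma weight_quadratic_eq_mul_det {lam lam' gam gam' rho rho' : ℝ × ℝ} {l0 l1 r0 r1 c0 c1 c2 : ℝ}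
    (hl0 : l0 = cross2 (rho - gam) (gam' - gam))
    (hl1 : l1 = cross2 (gam - gam') (rho' - gam'))
    (hr0 : r0 = -cross2 (gam' - gam) (lam - gam))
    (hr1 : r1 = -cross2 (lam' - gam') (gam - gam'))
    (hc0 : c0 = cross2 (rho - gam) (lam - gam))
    (hc1 : c1 = (1/2) * (cross2 (rho - gam) (lam' - gam') - cross2 (lam - gam) (rho' - gam')))
    (hc2 : c2 = -cross2 (lam' - gam') (rho' - gam')) :
    l1 ^ 2 * c0 - 2 * l0 * l1 * c1 + l0 ^ 2 * c2
      = -cross2 (rho - gam) (rho' - gam') * (l0 * r1 - l1 * r0) := by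
  subst hl0 hl1 hr0 hr1 hc0 hc1 hc2
  simp only [cross2, Prod.fst_sub, Prod.snd_sub]
  ring

theorem stmt11_general (n : ℕ) (hn : 4 ≤ n)
    (lam lam' gam gam' rho rho' : ℝ × ℝ)
    (hconvR3 : 0 < cross2 (gam' - rho') (gam - gam'))
    (hconvR4 : 0 < cross2 (gam - gam') (rho - gam))
    (l0 l1 r0 r1 c0 c1 c2 : ℝ)
    (hl0 : l0 = cross2 (rho - gam) (gam' - gam))
    (hl1 : l1 = cross2 (gam - gam') (rho' - gam'))
    (hr0 : r0 = -cross2 (gam' - gam) (lam - gam))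
    (hr1 : r1 = -cross2 (lam' - gam') (gam - gam'))
    (hc0 : c0 = cross2 (rho - gam) (lam - gam))
    (hc1 : c1 = (1/2) * (cross2 (rho - gam) (lam' - gam') - cross2 (lam - gam) (rho' - gam')))
    (hc2 : c2 = -cross2 (lam' - gam') (rho' - gam'))
    (dL dR dC : ℕ → ℝ)
    (h0 : EqS n l0 l1 r0 r1 c0 c1 c2 dL dR dC 0)
    (h1 : EqS n l0 l1 r0 r1 c0 c1 c2 dL dR dC 1)
    (hN : EqS n l0 l1 r0 r1 c0 c1 c2 dL dR dC n)
    (hN1 : EqS n l0 l1 r0 r1 c0 c1 c2 dL dR dC (n + 1)) :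
    ∃ dL' dR' : ℕ → ℝ,
      dL' 0 = dL 0 ∧ dL' 1 = dL 1 ∧ dL' (n - 1) = dL (n - 1) ∧ dL' n = dL n ∧
      dR' 0 = dR 0 ∧ dR' 1 = dR 1 ∧ dR' (n - 1) = dR (n - 1) ∧ dR' n = dR n ∧
      ∀ s, 2 ≤ s → s ≤ n - 1 → EqS n l0 l1 r0 r1 c0 c1 c2 dL' dR' dC s := by
  have hl0pos : 0 < l0 := by rwa [hl0, cross2_sub_sub]
  have hl1pos : 0 < l1 := by rwa [hl1, cross2_sub_sub]
  rcases eq_or_ne (l0 * r1 - l1 * r0) 0 with hdet | hdet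
  · refine middleConsistent_of_det_eq_zero (by omega) hl0pos.ne' hl1pos.ne' hdet ?_ h0 h1 hN hN1
    rw [weight_quadratic_eq_mul_det hl0 hl1 hr0 hr1 hc0 hc1 hc2, hdet, mul_zero]
  · exact middleConsistent_of_det_ne_zero hn hdet

/-- Consistency of the "Middle" system: for two adjacent strictly convex bilinearly
parametrised elements, if Eq(0), Eq(1), Eq(n) and Eq(n+1) hold, then the middle side
control values `ΔL_t, ΔR_t` (t = 2,…,n−2) can be chosen so that Eq(s) holds for every
s = 2,…,n−1. -/
theorem stmt11 (n : ℕ) (hn : 4 ≤ n)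
    (lam lam' gam gam' rho rho' : ℝ × ℝ)
    (hconvL1 : 0 < cross2 (gam - lam) (gam' - gam))
    (hconvL2 : 0 < cross2 (gam' - gam) (lam' - gam'))
    (hconvL3 : 0 < cross2 (lam' - gam') (lam - lam'))
    (hconvL4 : 0 < cross2 (lam - lam') (gam - lam))
    (hconvR1 : 0 < cross2 (rho - gam) (rho' - rho))
    (hconvR2 : 0 < cross2 (rho' - rho) (gam' - rho'))
    (hconvR3 : 0 < cross2 (gam' - rho') (gam - gam'))
    (hconvR4 : 0 < cross2 (gam - gam') (rho - gam))
    (l0 l1 r0 r1 c0 c1 c2 : ℝ)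
    (hl0 : l0 = cross2 (rho - gam) (gam' - gam))
    (hl1 : l1 = cross2 (gam - gam') (rho' - gam'))
    (hr0 : r0 = -cross2 (gam' - gam) (lam - gam))
    (hr1 : r1 = -cross2 (lam' - gam') (gam - gam'))
    (hc0 : c0 = cross2 (rho - gam) (lam - gam))
    (hc1 : c1 = (1/2) * (cross2 (rho - gam) (lam' - gam') - cross2 (lam - gam) (rho' - gam')))
    (hc2 : c2 = -cross2 (lam' - gam') (rho' - gam'))
    (dL dR dC : ℕ → ℝ)
    (h0 : EqS n l0 l1 r0 r1 c0 c1 c2 dL dR dC 0)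
    (h1 : EqS n l0 l1 r0 r1 c0 c1 c2 dL dR dC 1)
    (hN : EqS n l0 l1 r0 r1 c0 c1 c2 dL dR dC n)
    (hN1 : EqS n l0 l1 r0 r1 c0 c1 c2 dL dR dC (n + 1)) :
    ∃ dL' dR' : ℕ → ℝ,
      dL' 0 = dL 0 ∧ dL' 1 = dL 1 ∧ dL' (n - 1) = dL (n - 1) ∧ dL' n = dL n ∧
      dR' 0 = dR 0 ∧ dR' 1 = dR 1 ∧ dR' (n - 1) = dR (n - 1) ∧ dR' n = dR n ∧
      ∀ s, 2 ≤ s → s ≤ n - 1 → EqS n l0 l1 r0 r1 c0 c1 c2 dL' dR' dC s :=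
  stmt11_general n hn lam lam' gam gam' rho rho' hconvR3 hconvR4 l0 l1 r0 r1 c0 c1 c2 hl0 hl1 hr0
    hr1 hc0 hc1 hc2 dL dR dC h0 h1 hN hN1
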